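/- Let H be a Hilbert space and D(h)² = Σ_{k∈{0,1}ⁿ}(−1)^{|k|} T^k T*^k ≥ 0 the Szegő defect of a pure commuting n-tuple T of contractions (pure meaning ‖Tᵢ*ᵐ h‖ → 0 for all h and i; Szegő means D² ≥ 0). Then the map Π : H → H²_{D_T}(𝔻ⁿ) defined by (Πh)(z) = Σ_{k∈ℤ₊ⁿ} z^k D_T T*^k h is a well-defined isometry satisfying Π Tᵢ* = M_{zᵢ}* Π for i = 1, …, n, where D_T = (D²)^{1/2} and D_T = closure of its range. -/

import Mathlib

open ContinuousLinearMap

/-- `T^k = T₁^{k₁} ⋯ T_n^{k_n}` for a multi-index `k ∈ ℤ₊ⁿ`. -/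
def natPow {H : Type*} [NormedAddCommGroup H] [InnerProductSpace ℂ H]
    {n : ℕ} (T : Fin n → (H →L[ℂ] H)) (k : Fin n → ℕ) : H →L[ℂ] H :=
  (List.ofFn fun i => T i ^ k i).prod

/-- The Szegő defect `Σ_{k ∈ {0,1}^n} (−1)^{|k|} T^k T*^k` of a tuple. -/
noncomputable def szegoDefect {H : Type*} [NormedAddCommGroup H] [InnerProductSpace ℂ H]
    [CompleteSpace H] {n : ℕ} (T : Fin n → (H →L[ℂ] H)) : H →L[ℂ] H :=
  ∑ k : Fin n → Bool,
    ((-1 : ℂ) ^ (∑ i, if k i then 1 else 0 : ℕ)) •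
      (natPow T (fun i => if k i then 1 else 0) *
        ContinuousLinearMap.adjoint (natPow T (fun i => if k i then 1 else 0)))


/-!
Fix `x ∈ H` and put `f k = ‖T*^k x‖²`. Because `D_T² = ∑_ε (-1)^{|ε|} T^ε T*^ε`, the number
`‖D_T T*^k x‖²` is the mixed forward difference `∑_ε (-1)^{|ε|} f (k + ε)`. Summed over the box
`[0, m)ⁿ` these differences telescope to `∑_ε (-1)^{|ε|} f (m ε)`; each term with `ε ≠ 0` is at most
`‖Tᵢ*^m x‖²`, which tends to `0` by purity, so the box sums tend to `f 0 = ‖x‖²`. Hence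
`Π x = (D_T T*^k x)_k` is an isometry into `ℓ²(ℤ₊ⁿ, H)`, and `Π Tᵢ* = M_{zᵢ}* Π` is the index shift
`T*^{k + eᵢ} = T*^k Tᵢ*`.
-/

open Finset Filter Topology

namespace AddMonoidAlgebra

variable {R M ι : Type*} [CommRing R] [AddCommMonoid M] [DecidableEq ι]

theorem geom_sum_single_mul_one_sub (i : ι) (m : ℕ) :
    (∑ a ∈ range m, single (Pi.single i a : ι → ℕ) (1 : R)) *
        (1 - single (Pi.single i 1) 1) = 1 - single (Pi.single i m) 1 := by
  have hpow : ∀ a, single (Pi.single i a : ι → ℕ) (1 : R) = single (Pi.single i 1) 1 ^ a := by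
    intro a
    rw [single_pow, one_pow, ← Pi.single_smul, smul_eq_mul, mul_one]
  rw [sum_congr rfl fun a _ => hpow a, hpow m]
  exact geom_sum_mul_neg _ m

variable [Fintype ι]

theorem prod_one_sub_single (a : ι → M) :
    ∏ i, (1 - single (a i) (1 : R)) =
      ∑ ε : ι → Bool, single (∑ i, if ε i then a i else 0)
        ((-1 : R) ^ (∑ i, if ε i then 1 else 0 : ℕ)) := by
  have hsplit : ∀ i, 1 - single (a i) (1 : R) =
      ∑ b : Bool, single (if b then a i else 0) ((-1 : R) ^ (if b then 1 else 0 : ℕ)) := by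
    intro i
    simp [single_neg, one_def, sub_eq_neg_add]
  simp_rw [hsplit, Fintype.prod_sum, prod_single, Finset.prod_pow_eq_pow_sum]

theorem prod_one_sub_single_pi_single (c : ℕ) :
    ∏ i, (1 - single (Pi.single i c : ι → ℕ) (1 : R)) =
      ∑ ε : ι → Bool, single (fun i => if ε i then c else 0)
        ((-1 : R) ^ (∑ i, if ε i then 1 else 0 : ℕ)) := by
  rw [prod_one_sub_single]
  refine sum_congr rfl fun ε _ => ?_
  have hsingle : ∀ i, (if ε i then Pi.single i c else 0 : ι → ℕ) =
      Pi.single i (if ε i then c else 0) := fun i => by split_ifs <;> simp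
  simp_rw [hsingle, Finset.univ_sum_single]

theorem sum_piFinset_range_single (m : ℕ) :
    ∑ k ∈ Fintype.piFinset fun _ : ι => range m, single k (1 : R) =
      ∏ i, ∑ a ∈ range m, single (Pi.single i a : ι → ℕ) 1 := by
  rw [Finset.prod_univ_sum]
  refine sum_congr rfl fun k _ => ?_
  rw [prod_single, Finset.univ_sum_single, prod_const_one]

end AddMonoidAlgebra

section MixedDiff

open AddMonoidAlgebra

variable {R ι : Type*} [CommRing R] [Fintype ι] [DecidableEq ι]

def mixedDiff (f : (ι → ℕ) → R) (c : ℕ) (k : ι → ℕ) : R :=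
  ∑ ε : ι → Bool, (-1 : R) ^ (∑ i, if ε i then 1 else 0 : ℕ) * f (k + fun i => if ε i then c else 0)

theorem sum_piFinset_range_mixedDiff_one (f : (ι → ℕ) → R) (m : ℕ) :
    ∑ k ∈ Fintype.piFinset (fun _ : ι => range m), mixedDiff f 1 k = mixedDiff f m 0 := by
  -- In `R[ℕ^ι]` the claim is `∏ᵢ (∑_{a<m} Xᵢ^a) (1 - Xᵢ) = ∏ᵢ (1 - Xᵢ^m)`, read through the
  -- linear functional `X^k ↦ f k`.
  let L := (AddMonoidAlgebra.basis (ι → ℕ) R).constr R f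
  have hL : ∀ k r, L (single k r) = r * f k := fun k r => by
    rw [← mul_one r, ← smul_single', map_smul, ← basis_apply, Module.Basis.constr_basis,
      smul_eq_mul, mul_one]
  have key : (∑ k ∈ Fintype.piFinset (fun _ : ι => range m), single k (1 : R)) *
      ∏ i, (1 - single (Pi.single i 1 : ι → ℕ) (1 : R)) =
        ∏ i, (1 - single (Pi.single i m : ι → ℕ) (1 : R)) := by
    rw [sum_piFinset_range_single, ← prod_mul_distrib]
    exact prod_congr rfl fun i _ => geom_sum_single_mul_one_sub i m
  have := congrArg L key
  rw [prod_one_sub_single_pi_single, prod_one_sub_single_pi_single, sum_mul_sum] at this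
  simpa [mixedDiff, map_sum, single_mul_single, hL] using this

end MixedDiff

section BoxSums

variable {ι : Type*} [Fintype ι] [DecidableEq ι]

theorem exists_subset_piFinset_range (s : Finset (ι → ℕ)) :
    ∃ m, s ⊆ Fintype.piFinset fun _ : ι => range m := by
  obtain ⟨M, hM⟩ := s.exists_le
  refine ⟨univ.sup M + 1, fun k hk => Fintype.mem_piFinset.2 fun i => ?_⟩
  have : M i ≤ univ.sup M := le_sup (mem_univ i)
  exact mem_range.2 (Nat.lt_succ_of_le ((hM k hk i).trans this))

theorem hasSum_of_tendsto_sum_piFinset_range {g : (ι → ℕ) → ℝ} (hg : 0 ≤ g) {a : ℝ}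
    (h : Tendsto (fun m => ∑ k ∈ Fintype.piFinset (fun _ : ι => range m), g k) atTop (𝓝 a)) :
    HasSum g a := by
  have hmono : Monotone fun m => ∑ k ∈ Fintype.piFinset (fun _ : ι => range m), g k :=
    fun m m' hm => sum_le_sum_of_subset_of_nonneg
      (Fintype.piFinset_subset _ _ fun _ => range_subset_range.2 hm) fun k _ _ => hg k
  refine hasSum_of_isLUB_of_nonneg _ hg ⟨?_, fun b hb => ?_⟩
  · rintro _ ⟨s, rfl⟩
    obtain ⟨m, hm⟩ := exists_subset_piFinset_range s
    exact (sum_le_sum_of_subset_of_nonneg hm fun k _ _ => hg k).trans (hmono.ge_of_tendsto h m)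
  · exact le_of_tendsto' h fun m => hb ⟨_, rfl⟩

end BoxSums

section LpTwo

variable {𝕜 E F ι : Type*} [RCLike 𝕜] [SeminormedAddCommGroup E] [NormedSpace 𝕜 E]
  [NormedAddCommGroup F] [NormedSpace 𝕜 F]

theorem memℓp_two_of_summable_norm_sq {f : ι → F} (hf : Summable fun i => ‖f i‖ ^ 2) :
    Memℓp f 2 :=
  memℓp_gen <| by simpa using hf

def LinearIsometry.ofHasSumNormSq (A : ι → E →ₗ[𝕜] F)
    (hA : ∀ x, HasSum (fun i => ‖A i x‖ ^ 2) (‖x‖ ^ 2)) :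
    E →ₗᵢ[𝕜] lp (fun _ : ι => F) 2 where
  toFun x := ⟨fun i => A i x, memℓp_two_of_summable_norm_sq (hA x).summable⟩
  map_add' x y := lp.ext <| funext fun i => (A i).map_add x y
  map_smul' c x := lp.ext <| funext fun i => (A i).map_smul c x
  norm_map' x := by
    have h := lp.hasSum_norm (p := 2) (by norm_num)
      ⟨fun i => A i x, memℓp_two_of_summable_norm_sq (hA x).summable⟩
    simp only [ENNReal.toReal_ofNat, Real.rpow_two] at h
    exact (sq_eq_sq₀ (norm_nonneg _) (norm_nonneg _)).1 (h.unique (hA x))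

end LpTwo

section NatPow

variable {H : Type*} [NormedAddCommGroup H] [InnerProductSpace ℂ H] {n : ℕ}
  {T : Fin n → (H →L[ℂ] H)}

theorem pairwise_commute_pow (hcomm : ∀ i j, Commute (T i) (T j)) (a b : Fin n → ℕ)
    (s : Set (Fin n)) : s.Pairwise fun i j => Commute (T i ^ a i) (T j ^ b j) :=
  fun i _ j _ _ => (hcomm i j).pow_pow _ _

theorem natPow_eq_noncommProd (hcomm : ∀ i j, Commute (T i) (T j)) (k : Fin n → ℕ) :
    natPow T k = univ.noncommProd (fun i => T i ^ k i) (pairwise_commute_pow hcomm k k _) := by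
  rw [natPow, List.ofFn_eq_map]
  exact (Multiset.noncommProd_coe ((List.finRange n).map fun i => T i ^ k i) _).symm

theorem natPow_add (hcomm : ∀ i j, Commute (T i) (T j)) (a b : Fin n → ℕ) :
    natPow T (a + b) = natPow T a * natPow T b := by
  rw [natPow_eq_noncommProd hcomm, natPow_eq_noncommProd hcomm a, natPow_eq_noncommProd hcomm b]
  rw [← noncommProd_mul_distrib _ _ _ _ (pairwise_commute_pow hcomm b a _)]
  exact noncommProd_congr rfl (fun i _ => pow_add _ _ _) _

theorem natPow_zero : natPow T 0 = 1 := by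
  simp [natPow]

theorem natPow_single (hcomm : ∀ i j, Commute (T i) (T j)) (i : Fin n) (m : ℕ) :
    natPow T (Pi.single i m) = T i ^ m := by
  rw [natPow_eq_noncommProd hcomm]
  have hrest : (univ.erase i).noncommProd (fun j => T j ^ Pi.single i m j)
      (pairwise_commute_pow hcomm _ _ _) = 1 := by
    rw [noncommProd_eq_pow_card _ _ _ 1 fun j hj => by simp [ne_of_mem_erase hj], one_pow]
  rw [← mul_noncommProd_erase _ (mem_univ i)]
  exact (congrArg _ hrest).trans (by simp)

theorem norm_natPow_le_one (hcontr : ∀ i, ‖T i‖ ≤ 1) (k : Fin n → ℕ) : ‖natPow T k‖ ≤ 1 := by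
  let contractions : Submonoid (H →L[ℂ] H) :=
    { carrier := {A | ‖A‖ ≤ 1}
      mul_mem' := fun ha hb => (norm_mul_le _ _).trans (mul_le_one₀ ha (norm_nonneg _) hb)
      one_mem' := ContinuousLinearMap.norm_id_le }
  refine contractions.list_prod_mem fun A hA => ?_
  obtain ⟨i, rfl⟩ := List.mem_ofFn.1 hA
  exact contractions.pow_mem (hcontr i) _

variable [CompleteSpace H]

theorem adjoint_natPow_add (hcomm : ∀ i j, Commute (T i) (T j)) (a b : Fin n → ℕ) :
    adjoint (natPow T (a + b)) = adjoint (natPow T a) * adjoint (natPow T b) := by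
  rw [add_comm, natPow_add hcomm, ← star_eq_adjoint, star_mul]
  rfl

theorem adjoint_natPow_single (hcomm : ∀ i j, Commute (T i) (T j)) (i : Fin n) (m : ℕ) :
    adjoint (natPow T (Pi.single i m)) = adjoint (T i) ^ m := by
  rw [natPow_single hcomm, ← star_eq_adjoint, star_pow]
  rfl

theorem norm_adjoint_natPow_apply_le (hcomm : ∀ i j, Commute (T i) (T j))
    (hcontr : ∀ i, ‖T i‖ ≤ 1) {k l : Fin n → ℕ} (hkl : k ≤ l) (h : H) :
    ‖adjoint (natPow T l) h‖ ≤ ‖adjoint (natPow T k) h‖ := by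
  rw [← tsub_add_cancel_of_le hkl, adjoint_natPow_add hcomm, mul_apply_eq_comp]
  refine (le_opNorm _ _).trans (mul_le_of_le_one_left (norm_nonneg _) ?_)
  rw [LinearIsometryEquiv.norm_map]
  exact norm_natPow_le_one hcontr _

end NatPow

section SzegoDefect

variable {H : Type*} [NormedAddCommGroup H] [InnerProductSpace ℂ H] [CompleteSpace H] {n : ℕ}
  {T : Fin n → (H →L[ℂ] H)}

theorem norm_sq_apply_eq_mixedDiff {DT : H →L[ℂ] H} (hDT : IsSelfAdjoint DT)
    (hDT2 : DT ^ 2 = szegoDefect T) (x : H) :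
    ‖DT x‖ ^ 2 = mixedDiff (fun k => ‖adjoint (natPow T k) x‖ ^ 2) 1 0 := by
  rw [apply_norm_sq_eq_inner_adjoint_left, hDT.adjoint_eq, ← ContinuousLinearMap.mul_def,
    ← pow_two, hDT2, szegoDefect, mixedDiff]
  simp only [_root_.sum_apply, sum_inner, map_sum, zero_add]
  refine sum_congr rfl fun ε _ => ?_
  have hsign : (-1 : ℂ) ^ (∑ i, if ε i then 1 else 0 : ℕ) =
      ((-1 : ℝ) ^ (∑ i, if ε i then 1 else 0 : ℕ) : ℝ) := by push_cast; rfl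
  rw [apply_norm_sq_eq_inner_adjoint_left (adjoint _) x, adjoint_adjoint, smul_apply,
    inner_smul_left, hsign, Complex.conj_ofReal, RCLike.re_to_complex, RCLike.re_to_complex,
    Complex.re_ofReal_mul]
  rfl

theorem norm_sq_apply_adjoint_natPow_eq_mixedDiff (hcomm : ∀ i j, Commute (T i) (T j))
    {DT : H →L[ℂ] H} (hDT : IsSelfAdjoint DT) (hDT2 : DT ^ 2 = szegoDefect T) (h : H)
    (k : Fin n → ℕ) :
    ‖DT (adjoint (natPow T k) h)‖ ^ 2 = mixedDiff (fun k => ‖adjoint (natPow T k) h‖ ^ 2) 1 k := by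
  rw [norm_sq_apply_eq_mixedDiff hDT hDT2, mixedDiff, mixedDiff]
  refine sum_congr rfl fun ε _ => ?_
  rw [zero_add, add_comm k, adjoint_natPow_add hcomm, mul_apply_eq_comp]

theorem tendsto_mixedDiff_norm_sq_adjoint_natPow (hcomm : ∀ i j, Commute (T i) (T j))
    (hcontr : ∀ i, ‖T i‖ ≤ 1)
    (hpure : ∀ i (h : H), Tendsto (fun m : ℕ => ‖(adjoint (T i) ^ m) h‖) atTop (𝓝 0)) (h : H) :
    Tendsto (fun m => mixedDiff (fun k => ‖adjoint (natPow T k) h‖ ^ 2) m 0) atTop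
      (𝓝 (‖h‖ ^ 2)) := by
  have hterm : ∀ ε : Fin n → Bool,
      Tendsto (fun m : ℕ => (-1 : ℝ) ^ (∑ i, if ε i then 1 else 0 : ℕ) *
        ‖adjoint (natPow T (0 + fun i => if ε i then m else 0)) h‖ ^ 2) atTop
      (𝓝 (if ε = fun _ => false then ‖h‖ ^ 2 else 0)) := by
    intro ε
    split_ifs with hε
    · subst hε
      simp [← Pi.zero_def, natPow_zero, ← star_eq_adjoint]
    obtain ⟨i, hi⟩ : ∃ i, ε i := by
      by_contra! hc
      exact hε (funext fun i => by simpa using hc i)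
    have hle : ∀ m : ℕ, ‖adjoint (natPow T (0 + fun j => if ε j then m else 0)) h‖ ≤
        ‖(adjoint (T i) ^ m) h‖ := fun m => by
      have hsingle : Pi.single i m ≤ 0 + fun j => if ε j then m else 0 := fun j => by
        by_cases hj : j = i
        · subst hj; simp [hi]
        · simp [hj]
      rw [← adjoint_natPow_single hcomm]
      exact norm_adjoint_natPow_apply_le hcomm hcontr hsingle h
    have h0 := squeeze_zero (fun _ => norm_nonneg _) hle (hpure i h)
    simpa using (h0.pow 2).const_mul ((-1 : ℝ) ^ (∑ i, if ε i then 1 else 0 : ℕ))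
  simpa [mixedDiff] using tendsto_finsetSum univ fun ε _ => hterm ε

theorem hasSum_norm_sq_apply_adjoint_natPow (hcomm : ∀ i j, Commute (T i) (T j))
    (hcontr : ∀ i, ‖T i‖ ≤ 1)
    (hpure : ∀ i (h : H), Tendsto (fun m : ℕ => ‖(adjoint (T i) ^ m) h‖) atTop (𝓝 0))
    {DT : H →L[ℂ] H} (hDT : IsSelfAdjoint DT) (hDT2 : DT ^ 2 = szegoDefect T) (h : H) :
    HasSum (fun k => ‖DT (adjoint (natPow T k) h)‖ ^ 2) (‖h‖ ^ 2) := by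
  refine hasSum_of_tendsto_sum_piFinset_range (fun k => sq_nonneg _) ?_
  simp_rw [norm_sq_apply_adjoint_natPow_eq_mixedDiff hcomm hDT hDT2,
    sum_piFinset_range_mixedDiff_one]
  exact tendsto_mixedDiff_norm_sq_adjoint_natPow hcomm hcontr hpure h

end SzegoDefect

theorem canonical_dilation_of_pure_szego_tuple_general
    {H : Type*} [NormedAddCommGroup H] [InnerProductSpace ℂ H] [CompleteSpace H]
    {n : ℕ} (T : Fin n → (H →L[ℂ] H))
    (hcomm : ∀ i j, T i * T j = T j * T i)
    (hcontr : ∀ i, ‖T i‖ ≤ 1)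
    (hpure : ∀ (i : Fin n) (h : H),
      Filter.Tendsto (fun m : ℕ => ‖((ContinuousLinearMap.adjoint (T i)) ^ m) h‖)
        Filter.atTop (nhds 0))
    (DT : H →L[ℂ] H) (hDT : DT.IsPositive) (hDT2 : DT ^ 2 = szegoDefect T) :
    ∃ Dil : H →ₗᵢ[ℂ] lp (fun _ : Fin n → ℕ => H) 2,
      (∀ (h : H) (k : Fin n → ℕ),
        (Dil h : ∀ _ : Fin n → ℕ, H) k = DT (ContinuousLinearMap.adjoint (natPow T k) h)) ∧
      (∀ (i : Fin n) (h : H) (k : Fin n → ℕ),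
        (Dil (ContinuousLinearMap.adjoint (T i) h) : ∀ _ : Fin n → ℕ, H) k =
          (Dil h : ∀ _ : Fin n → ℕ, H) (k + fun j => if j = i then 1 else 0)) := by
  refine ⟨LinearIsometry.ofHasSumNormSq (fun k => (DT ∘L adjoint (natPow T k)).toLinearMap)
    (hasSum_norm_sq_apply_adjoint_natPow hcomm hcontr hpure hDT.isSelfAdjoint hDT2),
    fun h k => rfl, fun i h k => ?_⟩
  have hshift : (fun j => if j = i then 1 else 0) = (Pi.single i 1 : Fin n → ℕ) := by
    ext j
    simp [Pi.single_apply]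
  change DT (adjoint (natPow T k) (adjoint (T i) h)) = DT (adjoint (natPow T (k + _)) h)
  rw [hshift, adjoint_natPow_add hcomm, adjoint_natPow_single hcomm, pow_one, mul_apply_eq_comp]

/-- Dilation of a pure Szegő `n`-tuple: if `T = (T₁, …, Tₙ)` is a commuting tuple of
contractions with Szegő positivity, each `Tᵢ*` pure, and `D_T ≥ 0` is the square root
of the Szegő defect, then the map `Π h = (D_T T*^k h)_{k ∈ ℤ₊ⁿ}` is a well-defined
linear isometry of `H` into the Hardy space `H²(𝔻ⁿ)` (realized as `ℓ²(ℤ₊ⁿ)`) valued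
in the defect space, and in coordinates it satisfies `Π Tᵢ* = M_{zᵢ}* Π`, i.e.
`(Π (Tᵢ* h))(k) = (Π h)(k + eᵢ)`. -/
theorem canonical_dilation_of_pure_szego_tuple
    {H : Type*} [NormedAddCommGroup H] [InnerProductSpace ℂ H] [CompleteSpace H]
    {n : ℕ} (T : Fin n → (H →L[ℂ] H))
    (hcomm : ∀ i j, T i * T j = T j * T i)
    (hcontr : ∀ i, ‖T i‖ ≤ 1)
    (hpure : ∀ (i : Fin n) (h : H),
      Filter.Tendsto (fun m : ℕ => ‖((ContinuousLinearMap.adjoint (T i)) ^ m) h‖)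
        Filter.atTop (nhds 0))
    (hszego : (szegoDefect T).IsPositive)
    (DT : H →L[ℂ] H) (hDT : DT.IsPositive) (hDT2 : DT ^ 2 = szegoDefect T) :
    ∃ Dil : H →ₗᵢ[ℂ] lp (fun _ : Fin n → ℕ => H) 2,
      (∀ (h : H) (k : Fin n → ℕ),
        (Dil h : ∀ _ : Fin n → ℕ, H) k = DT (ContinuousLinearMap.adjoint (natPow T k) h)) ∧
      (∀ (i : Fin n) (h : H) (k : Fin n → ℕ),
        (Dil (ContinuousLinearMap.adjoint (T i) h) : ∀ _ : Fin n → ℕ, H) k =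
          (Dil h : ∀ _ : Fin n → ℕ, H) (k + fun j => if j = i then 1 else 0)) :=
  canonical_dilation_of_pure_szego_tuple_general T hcomm hcontr hpure DT hDT hDT2
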